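/- arXiv:2502.06363 — 2 statements merged into one kernel-verified Lean document; each statement's English description precedes it below -/
import Mathlib

section
/- Fix T ∈ ℕ+, nonnegative reals λ_1,…,λ_T and strictly positive reals λ̃_1,…,λ̃_T with λ_t ≤ λ̃_t for all t, and a nonempty subset 𝒳̃ ⊆ 𝒳. Set Σ_t := diag(λ_1²,…,λ_t²) and Σ̃_T := diag(λ̃_1²,…,λ̃_T²). Let x_1,…,x_T ∈ 𝒳̃ be chosen by maximum variance reduction: for every t ∈ [T] and every x ∈ 𝒳̃, σ_{Σ_{t−1}}(x; X_{t−1}) ≤ σ_{Σ_{t−1}}(x_t; X_{t−1}), where X_{t−1} := (x_1,…,x_{t−1}); assume K(X_t,X_t)+Σ_t is invertible for every t ≤ T. Suppose γ ≥ 0 satisfies I_{Σ̃_T}(Z) ≤ γ for every T-tuple Z of points of 𝒳, and that T/2 ≥ 4γ. Then for every x ∈ 𝒳̃, σ_{Σ_T}(x; X_T) ≤ (4/T)·√((Σ_{t=1}^T λ̃_t²)·γ). -/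
/-!
The posterior variance is the minimum over `v` of the prediction error
`k(x,x) - 2 vᵀk(x,X) + vᵀ(K + Σ)v`, so it can only drop when points are added and only grow with
the noise `Σ`. Writing `σ̃²_{t-1}` for the posterior variance given `X_{t-1}` under `Σ̃_{t-1}`, a
Schur complement step gives `det (K_T + Σ̃_T) = ∏_{t=1}^T (λ̃_t² + σ̃²_{t-1}(x_t))`, so the
information gain of `X_T` is `½ ∑_t log (1 + σ̃²_{t-1}(x_t) / λ̃_t²) ≤ γ`. The selection rule and
the two monotonicities give `σ²_{Σ_T}(x; X_T) ≤ σ̃²_{t-1}(x_t)` for every `t`. Since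
`min u 1 ≤ 2 log (1 + u)`, at most `4γ ≤ T/2` rounds have `σ̃²_{t-1}(x_t) ≥ λ̃_t²`, and over the
remaining `≥ T/2` rounds `∑ σ²_{Σ_T}(x; X_T) / λ̃_t² ≤ 4γ`; Cauchy–Schwarz then gives
`(T/2)² σ²_{Σ_T}(x; X_T) ≤ 4γ ∑_t λ̃_t²`.
-/

open Matrix Real Finset

noncomputable section

universe u

/-- Gram (kernel) matrix of a finite tuple of points. -/
def gramMat {𝒳 : Type u} (k : 𝒳 → 𝒳 → ℝ) {m : ℕ} (X : Fin m → 𝒳) :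
    Matrix (Fin m) (Fin m) ℝ :=
  Matrix.of fun i j => k (X i) (X j)

/-- Kernel vector `k(x, X)`. -/
def kVec {𝒳 : Type u} (k : 𝒳 → 𝒳 → ℝ) {m : ℕ} (X : Fin m → 𝒳) (x : 𝒳) : Fin m → ℝ :=
  fun i => k x (X i)

/-- Posterior variance `σ²_Σ(x; X)`. -/
def postVar {𝒳 : Type u} (k : 𝒳 → 𝒳 → ℝ) {m : ℕ} (S : Matrix (Fin m) (Fin m) ℝ)
    (X : Fin m → 𝒳) (x : 𝒳) : ℝ :=
  k x x - kVec k X x ⬝ᵥ ((gramMat k X + S)⁻¹ *ᵥ kVec k X x)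

/-- Posterior standard deviation `σ_Σ(x; X)`. -/
def postStd {𝒳 : Type u} (k : 𝒳 → 𝒳 → ℝ) {m : ℕ} (S : Matrix (Fin m) (Fin m) ℝ)
    (X : Fin m → 𝒳) (x : 𝒳) : ℝ :=
  Real.sqrt (postVar k S X x)

/-- Posterior mean `μ_Σ(x; X, y)`. -/
def postMean {𝒳 : Type u} (k : 𝒳 → 𝒳 → ℝ) {m : ℕ} (S : Matrix (Fin m) (Fin m) ℝ)
    (X : Fin m → 𝒳) (y : Fin m → ℝ) (x : 𝒳) : ℝ :=
  kVec k X x ⬝ᵥ ((gramMat k X + S)⁻¹ *ᵥ y)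

/-- Information gain `I_Σ(Z)`. -/
def infoGain {𝒳 : Type u} (k : 𝒳 → 𝒳 → ℝ) {m : ℕ} (S : Matrix (Fin m) (Fin m) ℝ)
    (Z : Fin m → 𝒳) : ℝ :=
  (1 / 2) * Real.log ((S + gramMat k Z).det / S.det)

/-- `k` is a symmetric positive semidefinite kernel. -/
def IsKernel {𝒳 : Type u} (k : 𝒳 → 𝒳 → ℝ) : Prop :=
  (∀ x y, k x y = k y x) ∧ ∀ (m : ℕ) (Z : Fin m → 𝒳), (gramMat k Z).PosSemidef

/-- Prefix of length `t` of a sequence of points. -/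
def preT {𝒳 : Type u} (x : ℕ → 𝒳) (t : ℕ) : Fin t → 𝒳 := fun i => x i.val

namespace Matrix

variable {R : Type*} [CommRing R]

theorem IsSymm.dotProduct_mulVec_sub_inv_mulVec {n : Type*} [Fintype n] [DecidableEq n]
    {A : Matrix n n R} (hA : A.IsSymm) (hdet : IsUnit A.det) (c v : n → R) :
    (v - A⁻¹ *ᵥ c) ⬝ᵥ (A *ᵥ (v - A⁻¹ *ᵥ c))
      = v ⬝ᵥ (A *ᵥ v) - 2 * (v ⬝ᵥ c) + c ⬝ᵥ (A⁻¹ *ᵥ c) := by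
  have hAu : A *ᵥ (A⁻¹ *ᵥ c) = c := by rw [mulVec_mulVec, mul_nonsing_inv _ hdet, one_mulVec]
  have huA : ∀ w, (A⁻¹ *ᵥ c) ⬝ᵥ (A *ᵥ w) = c ⬝ᵥ w := fun w => by
    rw [dotProduct_mulVec, ← mulVec_transpose, hA.eq, hAu]
  simp only [mulVec_sub, dotProduct_sub, sub_dotProduct, hAu, huA, dotProduct_comm c]
  ring

theorem PosSemidef.isSymm {n : Type*} [Fintype n] [PartialOrder R] [StarRing R] [TrivialStar R]
    {A : Matrix n n R} (hA : A.PosSemidef) : A.IsSymm :=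
  isHermitian_iff_isSymm.mp hA.isHermitian

variable {m : ℕ}

theorem snoc_dotProduct (v : Fin m → R) (a : R) (w : Fin (m + 1) → R) :
    Fin.snoc v a ⬝ᵥ w = v ⬝ᵥ (w ∘ Fin.castSucc) + a * w (Fin.last m) := by
  simp [dotProduct, Fin.sum_univ_castSucc]

theorem snoc_dotProduct_mulVec_snoc (M : Matrix (Fin (m + 1)) (Fin (m + 1)) R)
    (v : Fin m → R) (a : R) :
    Fin.snoc v a ⬝ᵥ (M *ᵥ Fin.snoc v a)
      = v ⬝ᵥ (M.submatrix Fin.castSucc Fin.castSucc *ᵥ v)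
        + a * (v ⬝ᵥ fun i => M i.castSucc (Fin.last m))
        + a * ((fun j => M (Fin.last m) j.castSucc) ⬝ᵥ v)
        + a * a * M (Fin.last m) (Fin.last m) := by
  simp only [dotProduct, mulVec, Fin.sum_univ_castSucc, Fin.snoc_castSucc, Fin.snoc_last,
    submatrix_apply, mul_sum, sum_add_distrib, mul_add]
  ring_nf

theorem det_succ_eq_det_mul_schur (M : Matrix (Fin (m + 1)) (Fin (m + 1)) R)
    (hA : IsUnit (M.submatrix Fin.castSucc Fin.castSucc).det) :
    M.det = (M.submatrix Fin.castSucc Fin.castSucc).det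
      * (M (Fin.last m) (Fin.last m) - (fun j => M (Fin.last m) j.castSucc)
          ⬝ᵥ ((M.submatrix Fin.castSucc Fin.castSucc)⁻¹
            *ᵥ fun i => M i.castSucc (Fin.last m))) := by
  set A := M.submatrix Fin.castSucc Fin.castSucc
  have : Invertible A := A.invertibleOfIsUnitDet hA
  have hblocks : M.submatrix finSumFinEquiv finSumFinEquiv
      = fromBlocks A (of fun i (_ : Fin 1) => M i.castSucc (Fin.last m))
          (of fun _ j => M (Fin.last m) j.castSucc)
          (of fun _ _ => M (Fin.last m) (Fin.last m)) := by
    ext (i | i) (j | j) <;> (try simp only [Fin.fin_one_eq_zero]) <;> rfl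
  rw [← det_submatrix_equiv_self finSumFinEquiv, hblocks, det_fromBlocks₁₁,
    invOf_eq_nonsing_inv]
  congr 1
  simp only [det_unique, sub_apply, of_apply, mul_apply, dotProduct, mulVec, sum_mul,
    mul_sum, mul_assoc]
  rw [sum_comm]

end Matrix

section PosteriorVariance

variable {𝒳 : Type*} {k : 𝒳 → 𝒳 → ℝ} {m : ℕ}

/-- Mean-square error of the linear predictor `v ⬝ᵥ y` of `f x`, where `f` has prior covariance
`k` and `y` observes `f` at `X` with noise covariance `S`; the posterior variance is its minimum. -/
def predictionError (k : 𝒳 → 𝒳 → ℝ) (S : Matrix (Fin m) (Fin m) ℝ) (X : Fin m → 𝒳) (x : 𝒳)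
    (v : Fin m → ℝ) : ℝ :=
  k x x - 2 * (v ⬝ᵥ kVec k X x) + v ⬝ᵥ ((gramMat k X + S) *ᵥ v)

theorem gramMat_submatrix {n : ℕ} (X : Fin m → 𝒳) (e : Fin n → Fin m) :
    (gramMat k X).submatrix e e = gramMat k (X ∘ e) :=
  rfl

theorem IsKernel.posSemidef_gramMat_add (hk : IsKernel k) {S : Matrix (Fin m) (Fin m) ℝ}
    (hS : S.PosSemidef) (X : Fin m → 𝒳) : (gramMat k X + S).PosSemidef :=
  (hk.2 m X).add hS

theorem predictionError_eq_postVar_add {S : Matrix (Fin m) (Fin m) ℝ} {X : Fin m → 𝒳}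
    (hsymm : (gramMat k X + S).IsSymm) (hdet : (gramMat k X + S).det ≠ 0) (x : 𝒳)
    (v : Fin m → ℝ) :
    predictionError k S X x v = postVar k S X x
      + (v - (gramMat k X + S)⁻¹ *ᵥ kVec k X x)
        ⬝ᵥ ((gramMat k X + S) *ᵥ (v - (gramMat k X + S)⁻¹ *ᵥ kVec k X x)) := by
  rw [hsymm.dotProduct_mulVec_sub_inv_mulVec hdet.isUnit, predictionError, postVar]
  ring

theorem postVar_eq_predictionError {S : Matrix (Fin m) (Fin m) ℝ} {X : Fin m → 𝒳}
    (hsymm : (gramMat k X + S).IsSymm) (hdet : (gramMat k X + S).det ≠ 0) (x : 𝒳) :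
    postVar k S X x = predictionError k S X x ((gramMat k X + S)⁻¹ *ᵥ kVec k X x) := by
  simp [predictionError_eq_postVar_add hsymm hdet]

theorem postVar_le_predictionError (hk : IsKernel k) {S : Matrix (Fin m) (Fin m) ℝ}
    (hS : S.PosSemidef) {X : Fin m → 𝒳} (hdet : (gramMat k X + S).det ≠ 0) (x : 𝒳)
    (v : Fin m → ℝ) : postVar k S X x ≤ predictionError k S X x v := by
  have hA := hk.posSemidef_gramMat_add hS X
  rw [predictionError_eq_postVar_add hA.isSymm hdet]
  exact le_add_of_nonneg_right (hA.dotProduct_mulVec_nonneg _)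

theorem predictionError_nonneg (hk : IsKernel k) {S : Matrix (Fin m) (Fin m) ℝ}
    (hS : S.PosSemidef) (X : Fin m → 𝒳) (x : 𝒳) (v : Fin m → ℝ) :
    0 ≤ predictionError k S X x v := by
  -- the error of the predictor is the prior variance of `f x - v ⬝ᵥ f X` plus the noise part
  have hprior := (hk.2 (m + 1) (Fin.snoc X x)).dotProduct_mulVec_nonneg (Fin.snoc v (-1))
  have hnoise := hS.dotProduct_mulVec_nonneg v
  have hcol : (fun i => gramMat k (Fin.snoc X x) i.castSucc (Fin.last m)) = kVec k X x :=
    funext fun i => by simp [gramMat, kVec, hk.1 (X i)]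
  have hrow : (fun j => gramMat k (Fin.snoc X x) (Fin.last m) j.castSucc) = kVec k X x :=
    funext fun j => by simp [gramMat, kVec]
  have hlast : gramMat k (Fin.snoc X x) (Fin.last m) (Fin.last m) = k x x := by simp [gramMat]
  simp only [star_trivial, snoc_dotProduct_mulVec_snoc, gramMat_submatrix,
    Fin.snoc_comp_castSucc, hcol, hrow, hlast, dotProduct_comm (kVec k X x)] at hprior hnoise
  simp only [predictionError, add_mulVec, dotProduct_add]
  linarith

theorem postVar_nonneg (hk : IsKernel k) {S : Matrix (Fin m) (Fin m) ℝ} (hS : S.PosSemidef)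
    {X : Fin m → 𝒳} (hdet : (gramMat k X + S).det ≠ 0) (x : 𝒳) : 0 ≤ postVar k S X x := by
  rw [postVar_eq_predictionError (hk.posSemidef_gramMat_add hS X).isSymm hdet]
  exact predictionError_nonneg hk hS X x _

theorem postVar_mono_noise (hk : IsKernel k) {S S' : Matrix (Fin m) (Fin m) ℝ}
    (hS : S.PosSemidef) (hSS' : (S' - S).PosSemidef) {X : Fin m → 𝒳}
    (hdet : (gramMat k X + S).det ≠ 0) (hdet' : (gramMat k X + S').det ≠ 0) (x : 𝒳) :
    postVar k S X x ≤ postVar k S' X x := by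
  have hS' : S'.PosSemidef := by simpa using hS.add hSS'
  set v := (gramMat k X + S')⁻¹ *ᵥ kVec k X x
  calc postVar k S X x ≤ predictionError k S X x v := postVar_le_predictionError hk hS hdet x v
    _ ≤ predictionError k S' X x v := by
      have := hSS'.dotProduct_mulVec_nonneg v
      simp only [star_trivial, sub_mulVec, dotProduct_sub] at this
      simp only [predictionError, add_mulVec, dotProduct_add]
      linarith
    _ = postVar k S' X x :=
      (postVar_eq_predictionError (hk.posSemidef_gramMat_add hS' X).isSymm hdet' x).symm

theorem postVar_le_postVar_castSucc (hk : IsKernel k) {S : Matrix (Fin (m + 1)) (Fin (m + 1)) ℝ}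
    (hS : S.PosSemidef) {X : Fin (m + 1) → 𝒳} (hdet : (gramMat k X + S).det ≠ 0)
    (hdet' : (gramMat k (X ∘ Fin.castSucc) + S.submatrix Fin.castSucc Fin.castSucc).det ≠ 0)
    (x : 𝒳) :
    postVar k S X x ≤ postVar k (S.submatrix Fin.castSucc Fin.castSucc) (X ∘ Fin.castSucc) x := by
  set v := (gramMat k (X ∘ Fin.castSucc) + S.submatrix Fin.castSucc Fin.castSucc)⁻¹
    *ᵥ kVec k (X ∘ Fin.castSucc) x
  have hsymm := (hk.posSemidef_gramMat_add (hS.submatrix Fin.castSucc) (X ∘ Fin.castSucc)).isSymm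
  calc postVar k S X x ≤ predictionError k S X x (Fin.snoc v 0) :=
        postVar_le_predictionError hk hS hdet x _
    _ = predictionError k (S.submatrix Fin.castSucc Fin.castSucc) (X ∘ Fin.castSucc) x v := by
      rw [predictionError, predictionError, snoc_dotProduct_mulVec_snoc,
        snoc_dotProduct]
      simp only [zero_mul, add_zero]
      rfl
    _ = _ := (postVar_eq_predictionError hsymm hdet' x).symm

end PosteriorVariance

section Sequential

variable {𝒳 : Type*} {k : 𝒳 → 𝒳 → ℝ}

/-- The paper's `Σ_t`, with its `λ_1, …, λ_t` stored as `f 0, …, f (t - 1)`. -/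
abbrev noiseCov (f : ℕ → ℝ) (t : ℕ) : Matrix (Fin t) (Fin t) ℝ :=
  diagonal fun i => f i.val ^ 2

theorem posSemidef_noiseCov (f : ℕ → ℝ) (t : ℕ) : (noiseCov f t).PosSemidef :=
  posSemidef_diagonal_iff.2 fun _ => sq_nonneg _

theorem posSemidef_noiseCov_sub {f g : ℕ → ℝ} {t : ℕ} (hf : ∀ s < t, 0 ≤ f s)
    (hfg : ∀ s < t, f s ≤ g s) : (noiseCov g t - noiseCov f t).PosSemidef := by
  rw [diagonal_sub, posSemidef_diagonal_iff]
  exact fun i => sub_nonneg.2 (pow_le_pow_left₀ (hf i i.2) (hfg i i.2) 2)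

theorem posDef_gramMat_add_noiseCov (hk : IsKernel k) {f : ℕ → ℝ} {t : ℕ}
    (hf : ∀ s < t, f s ≠ 0) (X : Fin t → 𝒳) : (gramMat k X + noiseCov f t).PosDef :=
  Matrix.PosDef.posSemidef_add (hk.2 t X)
    (posDef_diagonal_iff.2 fun i => pow_two_pos_of_ne_zero (hf i i.2))

theorem noiseCov_submatrix_castSucc (f : ℕ → ℝ) (t : ℕ) :
    (noiseCov f (t + 1)).submatrix Fin.castSucc Fin.castSucc = noiseCov f t := by
  rw [submatrix_diagonal _ _ (Fin.castSucc_injective t)]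
  rfl

theorem preT_comp_castSucc (xs : ℕ → 𝒳) (t : ℕ) : preT xs (t + 1) ∘ Fin.castSucc = preT xs t :=
  rfl

theorem postVar_preT_le_of_le (hk : IsKernel k) {xs : ℕ → 𝒳} {f : ℕ → ℝ} {a b : ℕ}
    (hdet : ∀ t ≤ b, (gramMat k (preT xs t) + noiseCov f t).det ≠ 0) (hab : a ≤ b) (x : 𝒳) :
    postVar k (noiseCov f b) (preT xs b) x ≤ postVar k (noiseCov f a) (preT xs a) x := by
  induction b, hab using Nat.le_induction with
  | base => rfl
  | succ b _ ih =>
    have hstep := postVar_le_postVar_castSucc hk (posSemidef_noiseCov f (b + 1))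
      (hdet (b + 1) le_rfl)
      (by rw [noiseCov_submatrix_castSucc, preT_comp_castSucc]; exact hdet b b.le_succ) x
    rw [noiseCov_submatrix_castSucc, preT_comp_castSucc] at hstep
    exact hstep.trans (ih fun t ht => hdet t (ht.trans b.le_succ))

theorem postVar_le_postVar_of_postStd_le (hk : IsKernel k) {xs : ℕ → 𝒳} {f g : ℕ → ℝ}
    {t T : ℕ} (htT : t ≤ T) (hf : ∀ s < t, 0 ≤ f s) (hfg : ∀ s < t, f s ≤ g s)
    (hg : ∀ s < t, g s ≠ 0) (hdet : ∀ s ≤ T, (gramMat k (preT xs s) + noiseCov f s).det ≠ 0)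
    {x : 𝒳} (hx : postStd k (noiseCov f t) (preT xs t) x
      ≤ postStd k (noiseCov f t) (preT xs t) (xs t)) :
    postVar k (noiseCov f T) (preT xs T) x ≤ postVar k (noiseCov g t) (preT xs t) (xs t) :=
  calc postVar k (noiseCov f T) (preT xs T) x
      ≤ postVar k (noiseCov f t) (preT xs t) x := postVar_preT_le_of_le hk hdet htT x
    _ ≤ postVar k (noiseCov f t) (preT xs t) (xs t) :=
      (sqrt_le_sqrt_iff (postVar_nonneg hk (posSemidef_noiseCov f t) (hdet t htT) _)).1 hx
    _ ≤ postVar k (noiseCov g t) (preT xs t) (xs t) :=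
      postVar_mono_noise hk (posSemidef_noiseCov f t) (posSemidef_noiseCov_sub hf hfg)
        (hdet t htT) (posDef_gramMat_add_noiseCov hk hg _).det_pos.ne' _

theorem det_gramMat_add_noiseCov_succ (hk : IsKernel k) (xs : ℕ → 𝒳) (f : ℕ → ℝ) {t : ℕ}
    (hdet : (gramMat k (preT xs t) + noiseCov f t).det ≠ 0) :
    (gramMat k (preT xs (t + 1)) + noiseCov f (t + 1)).det
      = (gramMat k (preT xs t) + noiseCov f t).det
        * (f t ^ 2 + postVar k (noiseCov f t) (preT xs t) (xs t)) := by
  have hsub : (gramMat k (preT xs (t + 1)) + noiseCov f (t + 1)).submatrix Fin.castSucc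
      Fin.castSucc = gramMat k (preT xs t) + noiseCov f t := by
    change (gramMat k _).submatrix _ _ + (noiseCov f _).submatrix _ _ = _
    rw [gramMat_submatrix, noiseCov_submatrix_castSucc, preT_comp_castSucc]
  set M := gramMat k (preT xs (t + 1)) + noiseCov f (t + 1)
  have hrow : (fun j => M (Fin.last t) j.castSucc) = kVec k (preT xs t) (xs t) := funext fun j => by
    simp [M, gramMat, kVec, preT, (Fin.castSucc_lt_last j).ne']
  have hcol : (fun i => M i.castSucc (Fin.last t)) = kVec k (preT xs t) (xs t) := funext fun i => by
    simp [M, gramMat, kVec, preT, (Fin.castSucc_lt_last i).ne, hk.1 (xs i)]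
  have hlast : M (Fin.last t) (Fin.last t) = k (xs t) (xs t) + f t ^ 2 := by
    simp [M, gramMat, preT]
  rw [det_succ_eq_det_mul_schur _ (hsub ▸ hdet.isUnit), hsub, hrow, hcol, hlast, postVar]
  ring

theorem det_gramMat_add_noiseCov_eq_prod (hk : IsKernel k) (xs : ℕ → 𝒳) {f : ℕ → ℝ} {n : ℕ}
    (hf : ∀ t < n, f t ≠ 0) :
    (gramMat k (preT xs n) + noiseCov f n).det
      = ∏ t ∈ range n, (f t ^ 2 + postVar k (noiseCov f t) (preT xs t) (xs t)) := by
  induction n with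
  | zero => simp
  | succ n ih =>
    have hf' : ∀ t < n, f t ≠ 0 := fun t ht => hf t (ht.trans n.lt_succ_self)
    rw [det_gramMat_add_noiseCov_succ hk xs f (posDef_gramMat_add_noiseCov hk hf' _).det_pos.ne',
      ih hf', prod_range_succ]

theorem infoGain_preT_eq_sum_log (hk : IsKernel k) (xs : ℕ → 𝒳) {f : ℕ → ℝ} {n : ℕ}
    (hf : ∀ t < n, f t ≠ 0) :
    infoGain k (noiseCov f n) (preT xs n)
      = 1 / 2 * ∑ t ∈ range n,
          log (1 + postVar k (noiseCov f t) (preT xs t) (xs t) / f t ^ 2) := by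
  have hfactor : ∀ t ∈ range n,
      (f t ^ 2 + postVar k (noiseCov f t) (preT xs t) (xs t)) / f t ^ 2
        = 1 + postVar k (noiseCov f t) (preT xs t) (xs t) / f t ^ 2 := fun t ht => by
    rw [add_div, div_self (pow_ne_zero 2 (hf t (mem_range.1 ht)))]
  have hpos : ∀ t ∈ range n,
      0 < 1 + postVar k (noiseCov f t) (preT xs t) (xs t) / f t ^ 2 := fun t ht => by
    have := postVar_nonneg hk (posSemidef_noiseCov f t)
      (posDef_gramMat_add_noiseCov hk (fun s hs => hf s (hs.trans (mem_range.1 ht)))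
        (preT xs t)).det_pos.ne' (xs t)
    positivity
  rw [infoGain, add_comm, det_gramMat_add_noiseCov_eq_prod hk xs hf, det_diagonal,
    Fin.prod_univ_eq_prod_range (fun t => f t ^ 2), ← prod_div_distrib,
    prod_congr rfl hfactor, log_prod fun t ht => (hpos t ht).ne']

theorem min_one_le_two_mul_log_one_add {u : ℝ} (hu : 0 ≤ u) : min u 1 ≤ 2 * log (1 + u) := by
  have hlog := le_log_one_add_of_nonneg hu
  have hmin : min u 1 ≤ 2 * (2 * u / (u + 2)) := by
    rw [mul_div_assoc', le_div_iff₀ (by linarith)]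
    rcases le_total u 1 with h | h
    · rw [min_eq_left h]; nlinarith
    · rw [min_eq_right h]; linarith
  linarith

theorem sqrt_le_div_mul_sqrt {a b v c : ℝ} (ha : 0 < a) (hb : 0 ≤ b)
    (h : a ^ 2 * v ≤ b ^ 2 * c) : √v ≤ b / a * √c := by
  rw [← sqrt_sq (div_nonneg hb ha.le), ← sqrt_mul (sq_nonneg _)]
  refine sqrt_le_sqrt ?_
  rw [div_pow, div_mul_eq_mul_div, le_div_iff₀ (by positivity)]
  linarith

theorem card_sq_mul_le_sum_mul_sum_div {ι : Type*} (B : Finset ι) {a : ι → ℝ}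
    (ha : ∀ t ∈ B, 0 < a t) {v : ℝ} (hv : 0 ≤ v) :
    (#B : ℝ) ^ 2 * v ≤ (∑ t ∈ B, a t) * ∑ t ∈ B, v / a t := by
  have hcs := sum_sq_le_sum_mul_sum_of_sq_le_mul B (r := fun _ => (1 : ℝ)) (f := a)
    (g := fun t => 1 / a t) (fun t ht => (ha t ht).le) (fun t ht => (one_div_pos.2 (ha t ht)).le)
    (fun t ht => by rw [mul_one_div_cancel (ha t ht).ne', one_pow])
  simp only [sum_const, nsmul_one] at hcs
  have hdiv : ∑ t ∈ B, v / a t = (∑ t ∈ B, 1 / a t) * v := by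
    rw [sum_mul]; exact sum_congr rfl fun t _ => by ring
  rw [hdiv, ← mul_assoc]
  exact mul_le_mul_of_nonneg_right hcs hv

theorem card_le_two_mul_card_filter_lt_one {T : ℕ} {u : ℕ → ℝ} {γ : ℝ}
    (hu : ∀ t ∈ range T, 0 ≤ u t) (hmin : ∑ t ∈ range T, min (u t) 1 ≤ 4 * γ)
    (hT : 8 * γ ≤ T) : (T : ℝ) ≤ 2 * #((range T).filter fun t => u t < 1) := by
  have hsplit := card_filter_add_card_filter_not (s := range T) (fun t => u t < 1)
  rw [card_range] at hsplit
  have hbig : (#((range T).filter fun t => ¬u t < 1) : ℝ) ≤ 4 * γ := by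
    refine le_trans ?_ ((sum_le_sum_of_subset_of_nonneg
      (filter_subset (fun t => ¬u t < 1) _) fun t ht _ => le_min (hu t ht) zero_le_one).trans hmin)
    rw [sum_congr rfl fun t ht => min_eq_right (not_lt.1 (mem_filter.1 ht).2), sum_const,
      nsmul_one]
  have hcast : (T : ℝ) = #((range T).filter fun t => u t < 1)
      + #((range T).filter fun t => ¬u t < 1) := by
    exact_mod_cast hsplit.symm
  linarith

theorem sq_mul_le_of_sum_log_le {T : ℕ} {a s : ℕ → ℝ} {v γ : ℝ} (ha : ∀ t < T, 0 < a t)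
    (hv : 0 ≤ v) (hvs : ∀ t < T, v ≤ s t)
    (hlog : ∑ t ∈ range T, log (1 + s t / a t) ≤ 2 * γ) (hT : 8 * γ ≤ T) :
    (T : ℝ) ^ 2 * v ≤ 16 * (∑ t ∈ range T, a t) * γ := by
  have hu : ∀ t ∈ range T, 0 ≤ s t / a t := fun t ht =>
    div_nonneg (hv.trans (hvs t (mem_range.1 ht))) (ha t (mem_range.1 ht)).le
  have hmin : ∑ t ∈ range T, min (s t / a t) 1 ≤ 4 * γ := by
    have := sum_le_sum fun t ht => min_one_le_two_mul_log_one_add (hu t ht)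
    rw [← mul_sum] at this
    linarith
  set B := (range T).filter fun t => s t / a t < 1
  have haB : ∀ t ∈ B, 0 < a t := fun t ht => ha t (mem_range.1 (mem_filter.1 ht).1)
  have hBsum : ∑ t ∈ B, v / a t ≤ 4 * γ := by
    refine le_trans (sum_le_sum fun t ht => ?_) ((sum_le_sum_of_subset_of_nonneg
      (filter_subset _ _) fun t ht _ => le_min (hu t ht) zero_le_one).trans hmin)
    obtain ⟨htT, hlt⟩ := mem_filter.1 ht
    rw [min_eq_left hlt.le]
    exact div_le_div_of_nonneg_right (hvs t (mem_range.1 htT)) (ha t (mem_range.1 htT)).le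
  have hsubsum : ∑ t ∈ B, a t ≤ ∑ t ∈ range T, a t :=
    sum_le_sum_of_subset_of_nonneg (filter_subset _ _) fun t ht _ => (ha t (mem_range.1 ht)).le
  calc (T : ℝ) ^ 2 * v ≤ (2 * #B) ^ 2 * v := by
        gcongr; exact card_le_two_mul_card_filter_lt_one hu hmin hT
    _ = 4 * (#B ^ 2 * v) := by ring
    _ ≤ 4 * ((∑ t ∈ range T, a t) * (4 * γ)) := by
      refine mul_le_mul_of_nonneg_left ((card_sq_mul_le_sum_mul_sum_div B haB hv).trans ?_)
        (by norm_num)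
      refine mul_le_mul hsubsum hBsum ?_ ?_
      · exact sum_nonneg fun t ht => div_nonneg hv (haB t ht).le
      · exact sum_nonneg fun t ht => (ha t (mem_range.1 ht)).le
    _ = 16 * (∑ t ∈ range T, a t) * γ := by ring

theorem mvr_posterior_variance_bound_nonstationary_general
    {𝒳 : Type u} (k : 𝒳 → 𝒳 → ℝ) (hk : IsKernel k)
    (T : ℕ) (hT : 0 < T)
    (lam lamTil : ℕ → ℝ)
    (hlam : ∀ t < T, 0 ≤ lam t) (hlamTil : ∀ t < T, 0 < lamTil t)
    (hle : ∀ t < T, lam t ≤ lamTil t)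
    (Xtil : Set 𝒳)
    (xs : ℕ → 𝒳)
    (hinv : ∀ t ≤ T,
      (gramMat k (preT xs t) + Matrix.diagonal (fun i : Fin t => lam i.val ^ 2)).det ≠ 0)
    (hMVR : ∀ t < T, ∀ x ∈ Xtil,
      postStd k (Matrix.diagonal fun i : Fin t => lam i.val ^ 2) (preT xs t) x
        ≤ postStd k (Matrix.diagonal fun i : Fin t => lam i.val ^ 2) (preT xs t) (xs t))
    (γ : ℝ)
    (hIG : ∀ Z : Fin T → 𝒳,
      infoGain k (Matrix.diagonal fun i : Fin T => lamTil i.val ^ 2) Z ≤ γ)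
    (hbig : (T : ℝ) / 2 ≥ 4 * γ) :
    ∀ x ∈ Xtil,
      postStd k (Matrix.diagonal fun i : Fin T => lam i.val ^ 2) (preT xs T) x
        ≤ (4 / (T : ℝ)) * Real.sqrt ((∑ t ∈ Finset.range T, lamTil t ^ 2) * γ) := by
  intro x hx
  have hlamTil_ne : ∀ t < T, lamTil t ≠ 0 := fun t ht => (hlamTil t ht).ne'
  have hvar : ∀ t < T, postVar k (noiseCov lam T) (preT xs T) x
      ≤ postVar k (noiseCov lamTil t) (preT xs t) (xs t) := fun t ht =>
    postVar_le_postVar_of_postStd_le hk ht.le (fun s hs => hlam s (hs.trans ht))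
      (fun s hs => hle s (hs.trans ht)) (fun s hs => hlamTil_ne s (hs.trans ht)) hinv
      (hMVR t ht x hx)
  have hlog := hIG (preT xs T)
  rw [infoGain_preT_eq_sum_log hk xs hlamTil_ne] at hlog
  have hbound := sq_mul_le_of_sum_log_le (a := fun t => lamTil t ^ 2) (γ := γ)
    (fun t ht => pow_pos (hlamTil t ht) 2)
    (postVar_nonneg hk (posSemidef_noiseCov lam T) (hinv T le_rfl) x) hvar (by linarith)
    (by linarith)
  refine sqrt_le_div_mul_sqrt (Nat.cast_pos.2 hT) (by norm_num) ?_
  linarith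

/-- posterior variance upper bound for MVR with non-stationary noise levels. -/
theorem mvr_posterior_variance_bound_nonstationary
    {𝒳 : Type u} (k : 𝒳 → 𝒳 → ℝ) (hk : IsKernel k)
    (T : ℕ) (hT : 0 < T)
    (lam lamTil : ℕ → ℝ)
    (hlam : ∀ t < T, 0 ≤ lam t) (hlamTil : ∀ t < T, 0 < lamTil t)
    (hle : ∀ t < T, lam t ≤ lamTil t)
    (Xtil : Set 𝒳) (hXtil : Xtil.Nonempty)
    (xs : ℕ → 𝒳) (hmem : ∀ t < T, xs t ∈ Xtil)
    (hinv : ∀ t ≤ T,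
      (gramMat k (preT xs t) + Matrix.diagonal (fun i : Fin t => lam i.val ^ 2)).det ≠ 0)
    (hMVR : ∀ t < T, ∀ x ∈ Xtil,
      postStd k (Matrix.diagonal fun i : Fin t => lam i.val ^ 2) (preT xs t) x
        ≤ postStd k (Matrix.diagonal fun i : Fin t => lam i.val ^ 2) (preT xs t) (xs t))
    (γ : ℝ) (hγ : 0 ≤ γ)
    (hIG : ∀ Z : Fin T → 𝒳,
      infoGain k (Matrix.diagonal fun i : Fin T => lamTil i.val ^ 2) Z ≤ γ)
    (hbig : (T : ℝ) / 2 ≥ 4 * γ) :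
    ∀ x ∈ Xtil,
      postStd k (Matrix.diagonal fun i : Fin T => lam i.val ^ 2) (preT xs T) x
        ≤ (4 / (T : ℝ)) * Real.sqrt ((∑ t ∈ Finset.range T, lamTil t ^ 2) * γ) :=
  mvr_posterior_variance_bound_nonstationary_general k hk T hT lam lamTil hlam hlamTil hle Xtil xs
    hinv hMVR γ hIG hbig
end Sequential
end
end

section
/- Fix d ∈ ℕ+, ν > 1/2, α > 0 and constants c > 0, C̄ > 0. Assume the Matérn-type information-gain bound: for every m ∈ ℕ+, every λ > 0 and every m-tuple Z of points of 𝒳, I_{λ²I_m}(Z) ≤ C̄·(m/λ²)^{d/(2ν+d)}·(ln(1 + m/λ²))^{2ν/(2ν+d)}. Let (λ̄_T)_{T∈ℕ+} be strictly positive reals with λ̄_T² ≥ c·T^{−2ν/d}·(ln(1+T))^{2ν(1+α)/d} for all T ∈ ℕ+, and for each T let x_{T,1},…,x_{T,T} ∈ 𝒳̃ (a nonempty subset of 𝒳) be chosen by maximum variance reduction with noise level λ̄_T²: for every t ∈ [T] and x ∈ 𝒳̃, σ_{λ̄_T²I_{t−1}}(x; X_{T,t−1}) ≤ σ_{λ̄_T²I_{t−1}}(x_{T,t};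 X_{T,t−1}). Then there exists T̄ ∈ ℕ+, depending only on c, C̄, α, d, ν, such that for every T ≥ T̄ and every x ∈ 𝒳̃: σ_{λ̄_T²I_T}(x; X_{T,T}) ≤ (4/T)·√( λ̄_T²·T·C̄·(T/λ̄_T²)^{d/(2ν+d)}·(ln(1 + T/λ̄_T²))^{2ν/(2ν+d)} ). -/
open Matrix Real Finset

noncomputable section

universe u

/-! Adding the points one at a time, the Schur complement gives
`det (K_T + λ²I) = ∏_{t<T} (λ² + σ²_t(x_{t+1}))`, so `I(X_T) = ½ ∑_t log (1 + σ²_t(x_{t+1}) / λ²)`.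
Posterior variance only decreases as points are added, and MVR picks the maximiser of `σ_t`, so
every summand dominates `log (1 + σ²_T(x) / λ²)`; hence `T log (1 + σ²_T(x) / λ²) ≤ 2 γ_T`, where
`γ_T` is the assumed information-gain bound at `m = T`, `l = λ̄_T`. The lower bound on `λ̄_T²`
gives `γ_T ≲ T log(1 + T)^(-2να/(2ν+d))`, so eventually `2 γ_T / T ≤ 1/2`, and in that range
`log (1 + y) ≤ a` forces `y ≤ 2a`, i.e. `σ²_T(x) ≤ 4 λ² γ_T / T`. -/

theorem Function.extend_zero_dotProduct {m n : Type*} [Fintype m] [Fintype n] (e : m ↪ n)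
    (z : m → ℝ) (v : n → ℝ) : Function.extend e z 0 ⬝ᵥ v = z ⬝ᵥ (v ∘ e) := by
  refine (Fintype.sum_of_injective e e.injective _ _ (fun i hi => ?_) fun j => ?_).symm
  · rw [Function.extend_apply' _ _ _ fun ⟨j, hj⟩ => hi ⟨j, hj⟩, Pi.zero_apply, zero_mul]
  · rw [Function.comp_apply, e.injective.extend_apply]

section QuadraticBounds

variable {m n : Type*} [Fintype m] [Fintype n] [DecidableEq m] [DecidableEq n]

theorem Matrix.PosDef.mulVec_inv_mulVec {A : Matrix n n ℝ} (hA : A.PosDef) (b : n → ℝ) :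
    A *ᵥ (A⁻¹ *ᵥ b) = b := by
  rw [mulVec_mulVec, mul_nonsing_inv _ hA.det_pos.ne'.isUnit, one_mulVec]

theorem Matrix.PosDef.two_mul_dotProduct_sub_le_dotProduct_inv_mulVec {A : Matrix n n ℝ}
    (hA : A.PosDef) (b w : n → ℝ) :
    2 * (w ⬝ᵥ b) - w ⬝ᵥ (A *ᵥ w) ≤ b ⬝ᵥ (A⁻¹ *ᵥ b) := by
  set z := A⁻¹ *ᵥ b
  have hsymm (u v : n → ℝ) : u ⬝ᵥ (A *ᵥ v) = v ⬝ᵥ (A *ᵥ u) := by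
    rw [dotProduct_comm, dotProduct_mulVec, ← mulVec_transpose,
      ← conjTranspose_eq_transpose_of_trivial, hA.isHermitian.eq]
  have hnonneg := hA.posSemidef.dotProduct_mulVec_nonneg (w - z)
  rw [star_trivial, mulVec_sub, dotProduct_sub, sub_dotProduct, sub_dotProduct, hsymm z w,
    hA.mulVec_inv_mulVec, dotProduct_comm z b] at hnonneg
  linarith

theorem Matrix.PosDef.dotProduct_inv_mulVec_submatrix_le {A : Matrix n n ℝ} (hA : A.PosDef)
    (e : m ↪ n) (b : n → ℝ) :
    (b ∘ e) ⬝ᵥ ((A.submatrix e e)⁻¹ *ᵥ (b ∘ e)) ≤ b ⬝ᵥ (A⁻¹ *ᵥ b) := by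
  -- Test the variational bound on the zero extension of the minimiser for the submatrix.
  set z := (A.submatrix e e)⁻¹ *ᵥ (b ∘ e)
  have hAw : (A *ᵥ Function.extend e z 0) ∘ e = A.submatrix e e *ᵥ z := by
    ext i
    rw [Function.comp_apply, mulVec, dotProduct_comm, Function.extend_zero_dotProduct,
      dotProduct_comm]
    rfl
  have := hA.two_mul_dotProduct_sub_le_dotProduct_inv_mulVec b (Function.extend e z 0)
  rw [Function.extend_zero_dotProduct, Function.extend_zero_dotProduct, hAw,
    (hA.submatrix e.injective).mulVec_inv_mulVec, dotProduct_comm z] at this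
  linarith

end QuadraticBounds

section PosteriorVariance

variable {𝒳 : Type u} {k : 𝒳 → 𝒳 → ℝ}

theorem IsKernel.posDef_gramMat_add_smul_one (hk : IsKernel k) {m : ℕ} (X : Fin m → 𝒳)
    {l2 : ℝ} (hl2 : 0 < l2) : (gramMat k X + l2 • (1 : Matrix (Fin m) (Fin m) ℝ)).PosDef :=
  PosDef.posSemidef_add (hk.2 m X) (PosDef.one.smul hl2)

theorem gramMat_submatrix_finSumFinEquiv (hsymm : ∀ x y, k x y = k y x) {t : ℕ}
    (X : Fin (t + 1) → 𝒳) :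
    (gramMat k X).submatrix finSumFinEquiv finSumFinEquiv =
      fromBlocks (gramMat k (Fin.init X))
        (replicateCol (Fin 1) (kVec k (Fin.init X) (X (Fin.last t))))
        (replicateCol (Fin 1) (kVec k (Fin.init X) (X (Fin.last t))))ᴴ
        (of fun _ _ => k (X (Fin.last t)) (X (Fin.last t))) := by
  ext (i | i) (j | j) <;> simp only [gramMat, kVec, Fin.init, submatrix_apply, of_apply,
    finSumFinEquiv_apply_left, finSumFinEquiv_apply_right, fromBlocks_apply₁₁,
    fromBlocks_apply₁₂, fromBlocks_apply₂₁, fromBlocks_apply₂₂, replicateCol_apply,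
    conjTranspose_apply, star_trivial, Fin.fin_one_eq_zero]
  exacts [rfl, hsymm _ _, rfl, rfl]

theorem schur_apply_eq_sub_add_postVar {m : ℕ} (S : Matrix (Fin m) (Fin m) ℝ) (X : Fin m → 𝒳)
    (x : 𝒳) (D : Matrix (Fin 1) (Fin 1) ℝ) :
    (D - (replicateCol (Fin 1) (kVec k X x))ᴴ * (gramMat k X + S)⁻¹ *
        replicateCol (Fin 1) (kVec k X x) : Matrix (Fin 1) (Fin 1) ℝ) 0 0
      = D 0 0 - k x x + postVar k S X x := by
  rw [Matrix.sub_apply, conjTranspose_replicateCol, star_trivial,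
    ← replicateRow_vecMul, replicateRow_mul_replicateCol_apply, ← dotProduct_mulVec, postVar]
  ring

theorem IsKernel.postVar_nonneg (hk : IsKernel k) {t : ℕ} (X : Fin t → 𝒳) (x : 𝒳) {l2 : ℝ}
    (hl2 : 0 < l2) : 0 ≤ postVar k (l2 • (1 : Matrix (Fin t) (Fin t) ℝ)) X x := by
  have hA := hk.posDef_gramMat_add_smul_one X hl2
  -- `postVar` is a Schur complement of the PSD matrix
  -- `gramMat (Fin.snoc X x) + diagonal (l2, …, l2, 0)`.
  have hnoise :
      (fromBlocks (l2 • 1) 0 0 0 : Matrix (Fin t ⊕ Fin 1) (Fin t ⊕ Fin 1) ℝ).PosSemidef := by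
    rw [smul_one_eq_diagonal, ← diagonal_zero, fromBlocks_diagonal]
    exact PosSemidef.diagonal fun i => by cases i <;> simp [hl2.le]
  have hM := ((hk.2 _ (Fin.snoc X x)).submatrix finSumFinEquiv).add hnoise
  simp only [gramMat_submatrix_finSumFinEquiv hk.1, fromBlocks_add, Fin.init_snoc, Fin.snoc_last,
    add_zero] at hM
  have := invertibleOfIsUnitDet _ hA.det_pos.ne'.isUnit
  have := ((PosDef.fromBlocks₁₁ _ _ hA).mp hM).diag_nonneg (i := 0)
  rwa [schur_apply_eq_sub_add_postVar, of_apply, sub_self, zero_add] at this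

theorem IsKernel.det_gramMat_add_smul_one_succ (hk : IsKernel k) {t : ℕ} (X : Fin (t + 1) → 𝒳)
    {l2 : ℝ} (hl2 : 0 < l2) :
    (gramMat k X + l2 • (1 : Matrix (Fin (t + 1)) (Fin (t + 1)) ℝ)).det
      = (gramMat k (Fin.init X) + l2 • (1 : Matrix (Fin t) (Fin t) ℝ)).det
        * (l2 + postVar k (l2 • (1 : Matrix (Fin t) (Fin t) ℝ)) (Fin.init X) (X (Fin.last t))) := by
  have hA := hk.posDef_gramMat_add_smul_one (Fin.init X) hl2
  have := invertibleOfIsUnitDet _ hA.det_pos.ne'.isUnit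
  have hsplit : (gramMat k X + l2 • 1).submatrix finSumFinEquiv finSumFinEquiv
      = (gramMat k X).submatrix finSumFinEquiv finSumFinEquiv
        + l2 • (1 : Matrix (Fin (t + 1)) (Fin (t + 1)) ℝ).submatrix finSumFinEquiv finSumFinEquiv :=
    rfl
  rw [← det_submatrix_equiv_self finSumFinEquiv, hsplit, submatrix_one_equiv, ← fromBlocks_one,
    fromBlocks_smul, gramMat_submatrix_finSumFinEquiv hk.1, fromBlocks_add]
  simp only [smul_zero, add_zero]
  rw [det_fromBlocks₁₁, invOf_eq_nonsing_inv, det_fin_one, schur_apply_eq_sub_add_postVar,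
    Matrix.add_apply, of_apply, Matrix.smul_apply, one_apply_eq, smul_eq_mul, mul_one]
  ring

theorem IsKernel.det_gramMat_preT_add_smul_one (hk : IsKernel k) (xs : ℕ → 𝒳) {l2 : ℝ}
    (hl2 : 0 < l2) (T : ℕ) :
    (gramMat k (preT xs T) + l2 • (1 : Matrix (Fin T) (Fin T) ℝ)).det
      = ∏ t ∈ range T,
          (l2 + postVar k (l2 • (1 : Matrix (Fin t) (Fin t) ℝ)) (preT xs t) (xs t)) := by
  induction T with
  | zero => simp
  | succ T ih =>
    rw [hk.det_gramMat_add_smul_one_succ (preT xs (T + 1)) hl2, prod_range_succ, ← ih]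
    rfl

theorem IsKernel.infoGain_preT_eq_sum (hk : IsKernel k) (xs : ℕ → 𝒳) {l2 : ℝ} (hl2 : 0 < l2)
    (T : ℕ) :
    infoGain k (l2 • (1 : Matrix (Fin T) (Fin T) ℝ)) (preT xs T)
      = 1 / 2 * ∑ t ∈ range T,
          log (1 + postVar k (l2 • (1 : Matrix (Fin t) (Fin t) ℝ)) (preT xs t) (xs t) / l2) := by
  have hpos (t : ℕ) := hk.postVar_nonneg (preT xs t) (xs t) hl2
  rw [infoGain, add_comm, hk.det_gramMat_preT_add_smul_one xs hl2, det_smul, det_one, mul_one,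
    Fintype.card_fin, pow_eq_prod_const, ← prod_div_distrib,
    log_prod fun t _ => by have := hpos t; positivity]
  congr 1
  refine sum_congr rfl fun t _ => ?_
  rw [add_div, div_self hl2.ne']

theorem IsKernel.postVar_preT_le_of_le (hk : IsKernel k) (xs : ℕ → 𝒳) (x : 𝒳) {l2 : ℝ}
    (hl2 : 0 < l2) {t T : ℕ} (htT : t ≤ T) :
    postVar k (l2 • (1 : Matrix (Fin T) (Fin T) ℝ)) (preT xs T) x
      ≤ postVar k (l2 • (1 : Matrix (Fin t) (Fin t) ℝ)) (preT xs t) x := by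
  have hsub : (gramMat k (preT xs T) + l2 • 1).submatrix (Fin.castLEEmb htT) (Fin.castLEEmb htT)
      = gramMat k (preT xs t) + l2 • (1 : Matrix (Fin t) (Fin t) ℝ) := by
    change (gramMat k (preT xs T)).submatrix _ _
      + l2 • (1 : Matrix (Fin T) (Fin T) ℝ).submatrix _ _ = _
    rw [submatrix_one_embedding]
    rfl
  have := (hk.posDef_gramMat_add_smul_one (preT xs T) hl2).dotProduct_inv_mulVec_submatrix_le
    (Fin.castLEEmb htT) (kVec k (preT xs T) x)
  rw [hsub] at this
  exact sub_le_sub_left this _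

theorem IsKernel.mul_log_one_add_postVar_le_infoGain (hk : IsKernel k) (xs : ℕ → 𝒳) (x : 𝒳)
    {l2 : ℝ} (hl2 : 0 < l2) {T : ℕ}
    (hmax : ∀ t < T, postVar k (l2 • (1 : Matrix (Fin t) (Fin t) ℝ)) (preT xs t) x
      ≤ postVar k (l2 • (1 : Matrix (Fin t) (Fin t) ℝ)) (preT xs t) (xs t)) :
    T * log (1 + postVar k (l2 • (1 : Matrix (Fin T) (Fin T) ℝ)) (preT xs T) x / l2)
      ≤ 2 * infoGain k (l2 • (1 : Matrix (Fin T) (Fin T) ℝ)) (preT xs T) := by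
  have hV := hk.postVar_nonneg (preT xs T) x hl2
  have hterm : ∀ t ∈ range T,
      log (1 + postVar k (l2 • (1 : Matrix (Fin T) (Fin T) ℝ)) (preT xs T) x / l2)
        ≤ log (1 + postVar k (l2 • (1 : Matrix (Fin t) (Fin t) ℝ)) (preT xs t) (xs t) / l2) :=
    fun t ht => log_le_log (by positivity) (by
      gcongr
      exact (hk.postVar_preT_le_of_le xs x hl2 (mem_range.mp ht).le).trans
        (hmax t (mem_range.mp ht)))
  have := card_nsmul_le_sum _ _ _ hterm
  rw [card_range, nsmul_eq_mul] at this
  rw [hk.infoGain_preT_eq_sum xs hl2]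
  linarith

end PosteriorVariance

/-- The assumed information-gain rate, as a function of `s = m / λ²`. -/
def maternGamma (Cb ν : ℝ) (d : ℕ) (s : ℝ) : ℝ :=
  Cb * s ^ ((d : ℝ) / (2 * ν + (d : ℝ))) * (Real.log (1 + s)) ^ (2 * ν / (2 * ν + (d : ℝ)))

theorem div_le_rpow_one_add_div {T a c L l2 : ℝ} (hT : 0 < T) (hcL : 0 < c * L)
    (h : c * T ^ (-a) * L ≤ l2) : T / l2 ≤ T ^ (1 + a) / (c * L) := by
  have hpos : 0 < c * T ^ (-a) * L := by
    rw [mul_right_comm]; exact mul_pos hcL (rpow_pos_of_pos hT _)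
  calc T / l2 ≤ T / (c * T ^ (-a) * L) := div_le_div_of_nonneg_left hT.le hpos h
    _ = T ^ (1 + a) / (c * L) := by
      rw [rpow_add hT, rpow_one, rpow_neg hT.le]
      field_simp

theorem log_one_add_le_of_le_rpow_div {s T b c : ℝ} (hs : 0 ≤ s) (hT : 0 ≤ T) (hb : 0 ≤ b)
    (hc : 0 < c) (h : s ≤ T ^ b / c) : log (1 + s) ≤ log (1 + 1 / c) + b * log (1 + T) := by
  have hTb : T ^ b ≤ (1 + T) ^ b := rpow_le_rpow hT (by linarith) hb
  have hone : 1 ≤ (1 + T) ^ b := one_le_rpow (by linarith) hb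
  have hle : 1 + s ≤ (1 + 1 / c) * (1 + T) ^ b := by
    calc 1 + s ≤ 1 + T ^ b / c := by linarith
      _ ≤ (1 + T) ^ b + (1 + T) ^ b / c := by gcongr
      _ = (1 + 1 / c) * (1 + T) ^ b := by ring
  calc log (1 + s) ≤ log ((1 + 1 / c) * (1 + T) ^ b) := log_le_log (by linarith) hle
    _ = log (1 + 1 / c) + b * log (1 + T) := by
      rw [log_mul (by positivity) (by positivity), log_rpow (by linarith)]

theorem maternGamma_div_le {d : ℕ} {ν α c Cb T l2 : ℝ} (hd : 0 < d) (hν : 0 < ν)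
    (hα : 0 ≤ 1 + α) (hc : 0 < c) (hCb : 0 ≤ Cb) (hT : 0 < T) (hG : 1 ≤ log (1 + T))
    (hl2 : c * T ^ (-(2 * ν) / d) * log (1 + T) ^ (2 * ν * (1 + α) / d) ≤ l2) :
    maternGamma Cb ν d (T / l2)
      ≤ Cb * c ^ (-((d : ℝ) / (2 * ν + d)))
        * (log (1 + 1 / c) + (1 + 2 * ν / d)) ^ (2 * ν / (2 * ν + d))
        * T * log (1 + T) ^ (-(2 * ν * α / (2 * ν + d))) := by
  have hd' : (0 : ℝ) < d := Nat.cast_pos.mpr hd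
  set G := log (1 + T)
  set p : ℝ := d / (2 * ν + d)
  set q : ℝ := 2 * ν / (2 * ν + d)
  set e : ℝ := 2 * ν * (1 + α) / d
  set C := log (1 + 1 / c) + (1 + 2 * ν / d)
  have hG0 : 0 < G := by linarith
  have hp : 0 < p := by positivity
  have hC1 : 0 ≤ log (1 + 1 / c) := log_nonneg (by simp [hc.le])
  have hC : 0 < C := by positivity
  have hq : 0 < q := by positivity
  have hL : 1 ≤ G ^ e := one_le_rpow hG (by positivity)
  have hs : T / l2 ≤ T ^ (1 + 2 * ν / d) / (c * G ^ e) :=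
    div_le_rpow_one_add_div hT (by positivity) (by rwa [neg_div] at hl2)
  have hl2pos : 0 < l2 := lt_of_lt_of_le (by positivity) hl2
  have hs0 : 0 ≤ T / l2 := by positivity
  have hpow : (T / l2) ^ p ≤ T * c ^ (-p) * G ^ (-(e * p)) := by
    have hbp : (1 + 2 * ν / d) * p = 1 := by simp only [p]; field_simp; ring
    calc (T / l2) ^ p ≤ (T ^ (1 + 2 * ν / d) / (c * G ^ e)) ^ p := rpow_le_rpow hs0 hs hp.le
      _ = T * c ^ (-p) * G ^ (-(e * p)) := by
        rw [div_rpow (by positivity) (by positivity), ← rpow_mul hT.le, hbp, rpow_one,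
          mul_rpow hc.le (by positivity), ← rpow_mul hG0.le, rpow_neg hc.le, rpow_neg hG0.le]
        field_simp
  have hlog : log (1 + T / l2) ≤ C * G := by
    have hs' : T / l2 ≤ T ^ (1 + 2 * ν / d) / c :=
      hs.trans (div_le_div_of_nonneg_left (by positivity) hc (le_mul_of_one_le_right hc.le hL))
    have := log_one_add_le_of_le_rpow_div hs0 hT.le (by positivity) hc hs'
    nlinarith
  have hlog0 : 0 ≤ log (1 + T / l2) := log_nonneg (by linarith)
  have hlogq0 := rpow_nonneg hlog0 q
  have hlogq : log (1 + T / l2) ^ q ≤ C ^ q * G ^ q :=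
    (rpow_le_rpow hlog0 hlog hq.le).trans_eq (mul_rpow hC.le hG0.le)
  have hexp : -(e * p) + q = -(2 * ν * α / (2 * ν + d)) := by
    simp only [e, p, q]; field_simp; ring
  calc maternGamma Cb ν d (T / l2) = Cb * (T / l2) ^ p * log (1 + T / l2) ^ q := rfl
    _ ≤ Cb * (T * c ^ (-p) * G ^ (-(e * p))) * (C ^ q * G ^ q) := by gcongr
    _ = Cb * c ^ (-p) * C ^ q * T * G ^ (-(2 * ν * α / (2 * ν + d))) := by
      rw [← hexp, rpow_add hG0]; ring

open Filter in
theorem exists_four_mul_maternGamma_le {d : ℕ} {ν α c Cb : ℝ} (hd : 0 < d) (hν : 0 < ν)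
    (hα : 0 < α) (hc : 0 < c) (hCb : 0 ≤ Cb) :
    ∃ Tb : ℕ, 0 < Tb ∧ ∀ T : ℕ, Tb ≤ T → ∀ l2 : ℝ,
      c * (T : ℝ) ^ (-(2 * ν) / d) * log (1 + T) ^ (2 * ν * (1 + α) / d) ≤ l2 →
        4 * maternGamma Cb ν d (T / l2) ≤ T := by
  set K := 4 * (Cb * c ^ (-((d : ℝ) / (2 * ν + d)))
    * (log (1 + 1 / c) + (1 + 2 * ν / d)) ^ (2 * ν / (2 * ν + d)))
  set β := 2 * ν * α / (2 * ν + d)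
  have hβ : 0 < β := by positivity
  have hG : Tendsto (fun T : ℕ => log (1 + (T : ℝ))) atTop atTop :=
    tendsto_log_atTop.comp (tendsto_atTop_add_const_left _ 1 tendsto_natCast_atTop_atTop)
  obtain ⟨N, hN⟩ := eventually_atTop.mp ((hG.eventually_ge_atTop 1).and
    (((tendsto_rpow_atTop hβ).comp hG).eventually_ge_atTop K))
  refine ⟨N + 1, N.succ_pos, fun T hT l2 hl2 => ?_⟩
  obtain ⟨hG1, hK⟩ := hN T (by omega)
  have hT0 : (0 : ℝ) < T := by norm_cast; omega
  have hGβ : 0 < log (1 + (T : ℝ)) ^ β := rpow_pos_of_pos (by linarith) _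
  calc 4 * maternGamma Cb ν d (T / l2)
      ≤ 4 * (Cb * c ^ (-((d : ℝ) / (2 * ν + d)))
        * (log (1 + 1 / c) + (1 + 2 * ν / d)) ^ (2 * ν / (2 * ν + d))
        * T * log (1 + T) ^ (-β)) := by
        gcongr
        exact maternGamma_div_le hd hν (by linarith) hc hCb hT0 hG1 hl2
    _ = K / log (1 + (T : ℝ)) ^ β * T := by
        rw [rpow_neg (x := log (1 + (T : ℝ))) (by linarith)]; ring
    _ ≤ 1 * T := by
        gcongr
        exact (div_le_one hGβ).mpr hK
    _ = T := one_mul _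

theorem le_two_mul_of_log_one_add_le {y a : ℝ} (hy : 0 ≤ y) (hlog : log (1 + y) ≤ a)
    (ha : a ≤ 1 / 2) : y ≤ 2 * a := by
  have h := (one_sub_inv_le_log_of_pos (by linarith : 0 < 1 + y)).trans hlog
  rw [inv_eq_one_div, one_sub_div (by linarith), add_sub_cancel_left,
    div_le_iff₀ (by linarith)] at h
  nlinarith

theorem sqrt_le_of_mul_log_one_add_le {V l2 γ T : ℝ} (hV : 0 ≤ V) (hl2 : 0 < l2) (hT : 0 < T)
    (hlog : T * log (1 + V / l2) ≤ 2 * γ) (hγT : 4 * γ ≤ T) :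
    sqrt V ≤ 4 / T * sqrt (l2 * T * γ) := by
  have hγ : 0 ≤ γ := by
    have := mul_nonneg hT.le (log_nonneg (le_add_of_nonneg_right (div_nonneg hV hl2.le)))
    linarith
  have hVl2 : V / l2 ≤ 2 * (2 * γ / T) :=
    le_two_mul_of_log_one_add_le (by positivity) (by rw [le_div_iff₀ hT]; linarith)
      (by rw [div_le_iff₀ hT]; linarith)
  have hVle : V ≤ (4 / T) ^ 2 * (l2 * T * γ) := by
    have h16 : (4 / T) ^ 2 * (l2 * T * γ) = 4 * (2 * (2 * γ / T) * l2) := by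
      field_simp; ring
    rw [div_le_iff₀ hl2] at hVl2
    linarith
  rw [← sqrt_sq (by positivity : 0 ≤ 4 / T), ← sqrt_mul (sq_nonneg _)]
  exact sqrt_le_sqrt hVle

/-- MVR posterior variance bound under the Matérn-type
information-gain bound, with `T̄` depending only on `c`, `C̄`, `α`, `d`, `ν`. -/
theorem mvr_posterior_variance_bound_Matern
    (d : ℕ) (hd : 0 < d) (ν : ℝ) (hν : 1 / 2 < ν) (α : ℝ) (hα : 0 < α)
    (c : ℝ) (hc : 0 < c) (Cb : ℝ) (hCb : 0 < Cb) :
    ∃ Tb : ℕ, 0 < Tb ∧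
      ∀ (𝒳 : Type u) (k : 𝒳 → 𝒳 → ℝ), IsKernel k →
      (∀ m : ℕ, 0 < m → ∀ l : ℝ, 0 < l → ∀ Z : Fin m → 𝒳,
        infoGain k ((l ^ 2) • (1 : Matrix (Fin m) (Fin m) ℝ)) Z
          ≤ Cb * ((m : ℝ) / l ^ 2) ^ ((d : ℝ) / (2 * ν + (d : ℝ)))
              * (Real.log (1 + (m : ℝ) / l ^ 2)) ^ (2 * ν / (2 * ν + (d : ℝ)))) →
      ∀ lamBar : ℕ → ℝ, (∀ T, 0 < lamBar T) →
      (∀ T : ℕ, 0 < T →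
        c * (T : ℝ) ^ (-(2 * ν) / (d : ℝ))
            * (Real.log (1 + (T : ℝ))) ^ (2 * ν * (1 + α) / (d : ℝ)) ≤ lamBar T ^ 2) →
      ∀ Xtil : Set 𝒳, Xtil.Nonempty →
      ∀ xs : ℕ → ℕ → 𝒳,
      (∀ T, 0 < T → ∀ t < T, xs T t ∈ Xtil) →
      (∀ T, 0 < T → ∀ t < T, ∀ x ∈ Xtil,
        postStd k ((lamBar T ^ 2) • (1 : Matrix (Fin t) (Fin t) ℝ)) (preT (xs T) t) x
          ≤ postStd k ((lamBar T ^ 2) • (1 : Matrix (Fin t) (Fin t) ℝ)) (preT (xs T) t)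
              (xs T t)) →
      ∀ T, Tb ≤ T → ∀ x ∈ Xtil,
        postStd k ((lamBar T ^ 2) • (1 : Matrix (Fin T) (Fin T) ℝ)) (preT (xs T) T) x
          ≤ (4 / (T : ℝ)) * Real.sqrt (lamBar T ^ 2 * T
              * (Cb * ((T : ℝ) / lamBar T ^ 2) ^ ((d : ℝ) / (2 * ν + (d : ℝ)))
                  * (Real.log (1 + (T : ℝ) / lamBar T ^ 2)) ^ (2 * ν / (2 * ν + (d : ℝ))))) := by
  obtain ⟨Tb, hTb0, hTb⟩ := exists_four_mul_maternGamma_le hd (one_half_pos.trans hν) hα hc hCb.le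
  refine ⟨Tb, hTb0, fun 𝒳 k hk hgain lamBar hlam hlow Xtil _ xs _ hmvr T hT x hx => ?_⟩
  have hT0 : 0 < T := hTb0.trans_le hT
  have hl2 : 0 < lamBar T ^ 2 := pow_pos (hlam T) 2
  have hmax (t : ℕ) (ht : t < T) := (sqrt_le_sqrt_iff (hk.postVar_nonneg _ _ hl2)).mp
    (hmvr T hT0 t ht x hx)
  have hgainT : infoGain k (lamBar T ^ 2 • 1) (preT (xs T) T)
      ≤ maternGamma Cb ν d (T / lamBar T ^ 2) := hgain T hT0 _ (hlam T) _
  exact sqrt_le_of_mul_log_one_add_le (hk.postVar_nonneg _ x hl2) hl2 (Nat.cast_pos.mpr hT0)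
    ((hk.mul_log_one_add_postVar_le_infoGain (xs T) x hl2 hmax).trans
      (mul_le_mul_of_nonneg_left hgainT zero_le_two))
    (hTb T hT _ (hlow T hT0))
end
end
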